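/- For any labeled polytree G = (V, E, L) and any vertices x, y ∈ V, the nested sequent 𝔑ₓ(G) is derivable from the nested sequent 𝔑_y(G) using only the display rules (rf) and (rp). -/

import Mathlib

set_option autoImplicit false

/-! # Common definitions: tense logics, nested/labeled/display calculi
    (following Ciabattoni, Lyon, Ramanayake, Tiu,
     "Display to Labeled Proofs and Back Again for Tense Logics") -/

/-- Diamonds: `wd` = ◇ (white diamond), `bd` = ◆ (black diamond). -/
inductive Dmd : Type
  | wd
  | bd
deriving DecidableEq, Repr

/-- Tense formulae in negation normal form:
    `A ::= p | p̄ | A ∧ A | A ∨ A | □A | ◇A | ■A | ◆A`. -/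
inductive Formula : Type
  | pos : Nat → Formula      -- propositional variable p
  | neg : Nat → Formula      -- negated propositional variable p̄
  | and : Formula → Formula → Formula
  | or : Formula → Formula → Formula
  | box : Formula → Formula   -- □
  | dia : Formula → Formula   -- ◇
  | bbox : Formula → Formula  -- ■
  | bdia : Formula → Formula  -- ◆
deriving DecidableEq, Repr

/-- The De Morgan dual `Ā` of a formula `A`. -/
def Formula.dual : Formula → Formula
  | .pos p => .neg p
  | .neg p => .pos p
  | .and A B => .or A.dual B.dual
  | .or A B => .and A.dual B.dual
  | .box A => .dia A.dual
  | .dia A => .box A.dual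
  | .bbox A => .bdia A.dual
  | .bdia A => .bbox A.dual

/-- `A → B` is defined as `Ā ∨ B`. -/
def Formula.imp (A B : Formula) : Formula := A.dual.or B

/-- `A ↔ B` is defined as `(A → B) ∧ (B → A)`. -/
def Formula.iffF (A B : Formula) : Formula := (A.imp B).and (B.imp A)

/-- `⟨?⟩A` for a diamond `⟨?⟩ ∈ {◇, ◆}`. -/
def dmdF : Dmd → Formula → Formula
  | .wd, A => .dia A
  | .bd, A => .bdia A

/-- `⟨?⟩₁…⟨?⟩ₘ A` for a string of diamonds. -/
def applyDmds : List Dmd → Formula → Formula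
  | [], A => A
  | d :: ds, A => dmdF d (applyDmds ds A)

/-- A general path axiom `ΠA → ΣA`, given by the strings `Π` (ant) and `Σ` (suc). -/
structure GenPath : Type where
  ant : List Dmd
  suc : List Dmd

/-- A path axiom `ΠA → ⟨?⟩A`. -/
structure PathAx : Type where
  ant : List Dmd
  suc : Dmd
deriving DecidableEq

/-- Every path axiom is a general path axiom. -/
def pathToGen (F : PathAx) : GenPath := ⟨F.ant, [F.suc]⟩

/-- All instances `ΠA → ΣA` of the general path axioms in `GP`. -/
def gpInstances (GP : Set GenPath) : Set Formula :=
  {F | ∃ gp ∈ GP, ∃ A : Formula, F = (applyDmds gp.ant A).imp (applyDmds gp.suc A)}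

/-- The Hilbert system `Kt + S`: classical propositional axioms, modus ponens,
    the tense axioms, and necessitation for □ and ■, plus the axioms in `S`. -/
inductive KtProof (S : Set Formula) : Formula → Prop
  | ax {A : Formula} : A ∈ S → KtProof S A
  | pl1 (A B : Formula) : KtProof S (A.imp (B.imp A))
  | pl2 (A B : Formula) : KtProof S ((B.dual.imp A.dual).imp (A.imp B))
  | pl3 (A B C : Formula) :
      KtProof S ((A.imp (B.imp C)).imp ((A.imp B).imp (A.imp C)))
  | tense1 (A : Formula) : KtProof S (A.imp (Formula.box (Formula.bdia A)))
  | tense2 (A : Formula) : KtProof S (A.imp (Formula.bbox (Formula.dia A)))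
  | kbox (A B : Formula) :
      KtProof S ((Formula.box (A.imp B)).imp ((Formula.box A).imp (Formula.box B)))
  | kbbox (A B : Formula) :
      KtProof S ((Formula.bbox (A.imp B)).imp ((Formula.bbox A).imp (Formula.bbox B)))
  | boxdual (A : Formula) :
      KtProof S ((Formula.box A).iffF (Formula.dia A.dual).dual)
  | bboxdual (A : Formula) :
      KtProof S ((Formula.bbox A).iffF (Formula.bdia A.dual).dual)
  | mp {A B : Formula} : KtProof S (A.imp B) → KtProof S A → KtProof S B
  | necbox {A : Formula} : KtProof S A → KtProof S (Formula.box A)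
  | necbbox {A : Formula} : KtProof S A → KtProof S (Formula.bbox A)

/-! ## Nested sequents -/

/-- Nested sequents: `X ::= ε | A | X, X | ∘{X} | •{X}`. -/
inductive NSeq : Type
  | empty
  | fml : Formula → NSeq
  | comma : NSeq → NSeq → NSeq
  | white : NSeq → NSeq   -- ∘{X}
  | black : NSeq → NSeq   -- •{X}
deriving DecidableEq, Repr

/-- Comma is associative and commutative with unit ε: the induced congruence. -/
inductive NEquiv : NSeq → NSeq → Prop
  | refl (X : NSeq) : NEquiv X X
  | symm {X Y : NSeq} : NEquiv X Y → NEquiv Y X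
  | trans {X Y Z : NSeq} : NEquiv X Y → NEquiv Y Z → NEquiv X Z
  | comm (X Y : NSeq) : NEquiv (X.comma Y) (Y.comma X)
  | assoc (X Y Z : NSeq) : NEquiv ((X.comma Y).comma Z) (X.comma (Y.comma Z))
  | unit (X : NSeq) : NEquiv (X.comma NSeq.empty) X
  | commaCongr {X X' Y Y' : NSeq} :
      NEquiv X X' → NEquiv Y Y' → NEquiv (X.comma Y) (X'.comma Y')
  | whiteCongr {X Y : NSeq} : NEquiv X Y → NEquiv X.white Y.white
  | blackCongr {X Y : NSeq} : NEquiv X Y → NEquiv X.black Y.black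

/-- `★₁{… ★ₙ{Y} …}` where `★ⱼ = ∘` if `⟨?⟩ⱼ = ◇` and `★ⱼ = •` if `⟨?⟩ⱼ = ◆`. -/
def nestDmds : List Dmd → NSeq → NSeq
  | [], Y => Y
  | .wd :: ds, Y => (nestDmds ds Y).white
  | .bd :: ds, Y => (nestDmds ds Y).black

/-- The structural rules `NestSt(GP)` (premise, conclusion): for each
    `ΠA → ΣA ∈ GP`, from `X, ★Σ{Y}` infer `X, ★Π{Y}`. -/
def NestSt (GP : Set GenPath) : NSeq → NSeq → Prop :=
  fun prem concl => ∃ gp ∈ GP, ∃ X Y : NSeq,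
    prem = X.comma (nestDmds gp.suc Y) ∧ concl = X.comma (nestDmds gp.ant Y)

/-- The empty set of extension rules on nested sequents. -/
def NoNest : NSeq → NSeq → Prop := fun _ _ => False

/-- The shallow nested (display) calculus `SKT` extended with the
    structural rules `Ext` (relating premise to conclusion); nested sequents are
    treated up to the congruence `NEquiv` (comma is AC with unit ε). -/
inductive SKT (Ext : NSeq → NSeq → Prop) : NSeq → Prop
  | id (X : NSeq) (p : Nat) :
      SKT Ext ((X.comma (.fml (.pos p))).comma (.fml (.neg p)))
  | orR {X : NSeq} {A B : Formula} :
      SKT Ext (X.comma ((NSeq.fml A).comma (.fml B))) →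
      SKT Ext (X.comma (.fml (.or A B)))
  | andR {X : NSeq} {A B : Formula} :
      SKT Ext (X.comma (.fml A)) → SKT Ext (X.comma (.fml B)) →
      SKT Ext (X.comma (.fml (.and A B)))
  | ctr {X Y : NSeq} : SKT Ext (X.comma (Y.comma Y)) → SKT Ext (X.comma Y)
  | wk {X Y : NSeq} : SKT Ext X → SKT Ext (X.comma Y)
  | rf {X Y : NSeq} : SKT Ext (X.comma Y.white) → SKT Ext (X.black.comma Y)
  | rp {X Y : NSeq} : SKT Ext (X.comma Y.black) → SKT Ext (X.white.comma Y)
  | bbox {X : NSeq} {A : Formula} :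
      SKT Ext (X.comma (NSeq.fml A).black) → SKT Ext (X.comma (.fml (.bbox A)))
  | box {X : NSeq} {A : Formula} :
      SKT Ext (X.comma (NSeq.fml A).white) → SKT Ext (X.comma (.fml (.box A)))
  | bdia {X Y : NSeq} {A : Formula} :
      SKT Ext ((X.comma (Y.comma (.fml A)).black).comma (.fml (.bdia A))) →
      SKT Ext ((X.comma Y.black).comma (.fml (.bdia A)))
  | dia {X Y : NSeq} {A : Formula} :
      SKT Ext ((X.comma (Y.comma (.fml A)).white).comma (.fml (.dia A))) →
      SKT Ext ((X.comma Y.white).comma (.fml (.dia A)))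
  | ext {X Y : NSeq} : Ext X Y → SKT Ext X → SKT Ext Y
  | equiv {X Y : NSeq} : SKT Ext X → NEquiv X Y → SKT Ext Y

/-! ## Deep nested calculus -/

/-- One-hole contexts over nested sequents (up to `NEquiv` this suffices). -/
inductive Ctx : Type
  | hole
  | commaL : Ctx → NSeq → Ctx
  | white : Ctx → Ctx
  | black : Ctx → Ctx

/-- Filling the hole of a context with a nested sequent. -/
def Ctx.fill : Ctx → NSeq → NSeq
  | .hole, X => X
  | .commaL C Y, X => (C.fill X).comma Y
  | .white C, X => (C.fill X).white
  | .black C, X => (C.fill X).black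

/-- The deep nested calculus `DKT` extended with rules `Ext`
    (premise, conclusion); sequents are treated up to `NEquiv`. -/
inductive DKT (Ext : NSeq → NSeq → Prop) : NSeq → Prop
  | id (C : Ctx) (p : Nat) :
      DKT Ext (C.fill ((NSeq.fml (.pos p)).comma (.fml (.neg p))))
  | andD {C : Ctx} {Y : NSeq} {A B : Formula} :
      DKT Ext (C.fill ((NSeq.fml A).comma Y)) →
      DKT Ext (C.fill ((NSeq.fml B).comma Y)) →
      DKT Ext (C.fill ((NSeq.fml (.and A B)).comma Y))
  | orD {C : Ctx} {Y : NSeq} {A B : Formula} :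
      DKT Ext (C.fill ((NSeq.fml A).comma ((NSeq.fml B).comma Y))) →
      DKT Ext (C.fill ((NSeq.fml (.or A B)).comma Y))
  | bboxD {C : Ctx} {A : Formula} :
      DKT Ext (C.fill ((NSeq.fml (.bbox A)).comma (NSeq.fml A).black)) →
      DKT Ext (C.fill (.fml (.bbox A)))
  | boxD {C : Ctx} {A : Formula} :
      DKT Ext (C.fill ((NSeq.fml (.box A)).comma (NSeq.fml A).white)) →
      DKT Ext (C.fill (.fml (.box A)))
  | bdia1 {C : Ctx} {Y : NSeq} {A : Formula} :
      DKT Ext (C.fill ((Y.comma (.fml A)).black.comma (.fml (.bdia A)))) →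
      DKT Ext (C.fill (Y.black.comma (.fml (.bdia A))))
  | bdia2 {C : Ctx} {Y : NSeq} {A : Formula} :
      DKT Ext (C.fill ((Y.comma (.fml (.bdia A))).white.comma (.fml A))) →
      DKT Ext (C.fill ((Y.comma (.fml (.bdia A))).white))
  | dia1 {C : Ctx} {Y : NSeq} {A : Formula} :
      DKT Ext (C.fill ((Y.comma (.fml A)).white.comma (.fml (.dia A)))) →
      DKT Ext (C.fill (Y.white.comma (.fml (.dia A))))
  | dia2 {C : Ctx} {Y : NSeq} {A : Formula} :
      DKT Ext (C.fill ((Y.comma (.fml (.dia A))).black.comma (.fml A))) →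
      DKT Ext (C.fill ((Y.comma (.fml (.dia A))).black))
  | ext {X Y : NSeq} : Ext X Y → DKT Ext X → DKT Ext Y
  | equiv {X Y : NSeq} : DKT Ext X → NEquiv X Y → DKT Ext Y

/-! ## Display rules and display equivalence -/

/-- `DisplayDeriv X Z`: `Z` is derivable from `X` using only the display rules
    (rf) and (rp) (and rearrangement by the comma-congruence `NEquiv`). -/
inductive DisplayDeriv : NSeq → NSeq → Prop
  | refl (X : NSeq) : DisplayDeriv X X
  | equiv {X Y Z : NSeq} : NEquiv X Y → DisplayDeriv Y Z → DisplayDeriv X Z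
  | rf {X Y Z : NSeq} :
      DisplayDeriv (X.black.comma Y) Z → DisplayDeriv (X.comma Y.white) Z
  | rp {X Y Z : NSeq} :
      DisplayDeriv (X.white.comma Y) Z → DisplayDeriv (X.comma Y.black) Z

/-- Two nested sequents are display equivalent when each is derivable from the
    other using only the display rules. -/
def DisplayEquiv (X Y : NSeq) : Prop := DisplayDeriv X Y ∧ DisplayDeriv Y X

/-! ## Labeled sequents and the labeled calculus G3Kt -/

abbrev Label : Type := Nat

/-- A set of relational atoms `Rxy`. -/
abbrev RelSet : Type := Finset (Label × Label)

/-- A labeled sequent `R, Γ`. -/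
abbrev LSeq : Type := RelSet × Multiset (Label × Formula)

/-- The label `z` occurs in the labeled sequent `S`. -/
def occursLS (z : Label) (S : LSeq) : Prop :=
  (∃ w, (z, w) ∈ S.1 ∨ (w, z) ∈ S.1) ∨ ∃ A, (z, A) ∈ S.2

/-- `R_◇ x y := Rxy` and `R_◆ x y := Ryx`. -/
def relAtom : Dmd → Label → Label → Label × Label
  | .wd, x, y => (x, y)
  | .bd, x, y => (y, x)

/-- Relational atoms of a `Π`-chain through the list of labels `ls`. -/
def chainAtoms : List Dmd → List Label → List (Label × Label)
  | d :: ds, a :: b :: rest => relAtom d a b :: chainAtoms ds (b :: rest)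
  | _, _ => []

/-- `ls` is a chain of labels for the diamond string `ds` from `x` to `y`
    (an empty string forces `x = y`). -/
def IsChainList (ds : List Dmd) (x y : Label) (ls : List Label) : Prop :=
  ls.length = ds.length + 1 ∧ ls.head? = some x ∧ ls.getLast? = some y

/-- The structural rules `LabSt(GP)` (premise, conclusion): for `ΠA → ΣA ∈ GP`,
    from `R, R_Π x y, R_Σ x y, Γ` infer `R, R_Π x y, Γ`, where all labels in
    `R_Σ x y` other than `x, y` are eigenvariables. -/
def LabSt (GP : Set GenPath) : LSeq → LSeq → Prop :=
  fun prem concl => ∃ gp ∈ GP,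
    ∃ (R : RelSet) (Γ : Multiset (Label × Formula)) (x y : Label)
      (als sls : List Label),
      IsChainList gp.ant x y als ∧ IsChainList gp.suc x y sls ∧
      concl = (R ∪ (chainAtoms gp.ant als).toFinset, Γ) ∧
      prem = (R ∪ (chainAtoms gp.ant als).toFinset ∪
                (chainAtoms gp.suc sls).toFinset, Γ) ∧
      (∀ z ∈ sls, z ≠ x → z ≠ y → ¬ occursLS z concl)

/-- The empty set of extension rules on labeled sequents. -/
def NoExt : LSeq → LSeq → Prop := fun _ _ => False

/-- Derivations in the labeled calculus `G3Kt` extended with rules `Ext`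
    (relating premise to conclusion). -/
inductive G3KtD (Ext : LSeq → LSeq → Prop) :
    RelSet → Multiset (Label × Formula) → Type
  | id (R : RelSet) (Γ : Multiset (Label × Formula)) (x : Label) (p : Nat) :
      G3KtD Ext R ((x, .pos p) ::ₘ (x, .neg p) ::ₘ Γ)
  | orR (R : RelSet) (Γ : Multiset (Label × Formula)) (x : Label) (A B : Formula)
      (D : G3KtD Ext R ((x, A) ::ₘ (x, B) ::ₘ Γ)) :
      G3KtD Ext R ((x, .or A B) ::ₘ Γ)
  | andR (R : RelSet) (Γ : Multiset (Label × Formula)) (x : Label) (A B : Formula)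
      (D1 : G3KtD Ext R ((x, A) ::ₘ Γ)) (D2 : G3KtD Ext R ((x, B) ::ₘ Γ)) :
      G3KtD Ext R ((x, .and A B) ::ₘ Γ)
  | boxR (R : RelSet) (Γ : Multiset (Label × Formula)) (x y : Label) (A : Formula)
      (hy : ¬ occursLS y (R, (x, Formula.box A) ::ₘ Γ))
      (D : G3KtD Ext (insert (x, y) R) ((y, A) ::ₘ Γ)) :
      G3KtD Ext R ((x, .box A) ::ₘ Γ)
  | diaR (R : RelSet) (Γ : Multiset (Label × Formula)) (x y : Label) (A : Formula)
      (h : (x, y) ∈ R)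
      (D : G3KtD Ext R ((y, A) ::ₘ (x, Formula.dia A) ::ₘ Γ)) :
      G3KtD Ext R ((x, .dia A) ::ₘ Γ)
  | bboxR (R : RelSet) (Γ : Multiset (Label × Formula)) (x y : Label) (A : Formula)
      (hy : ¬ occursLS y (R, (x, Formula.bbox A) ::ₘ Γ))
      (D : G3KtD Ext (insert (y, x) R) ((y, A) ::ₘ Γ)) :
      G3KtD Ext R ((x, .bbox A) ::ₘ Γ)
  | bdiaR (R : RelSet) (Γ : Multiset (Label × Formula)) (x y : Label) (A : Formula)
      (h : (y, x) ∈ R)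
      (D : G3KtD Ext R ((y, A) ::ₘ (x, Formula.bdia A) ::ₘ Γ)) :
      G3KtD Ext R ((x, .bdia A) ::ₘ Γ)
  | ext (R' : RelSet) (Γ' : Multiset (Label × Formula))
      (R : RelSet) (Γ : Multiset (Label × Formula))
      (h : Ext (R', Γ') (R, Γ)) (D : G3KtD Ext R' Γ') : G3KtD Ext R Γ

/-- Derivability in `G3Kt + Ext`. -/
def G3KtDeriv (Ext : LSeq → LSeq → Prop) (R : RelSet)
    (Γ : Multiset (Label × Formula)) : Prop :=
  Nonempty (G3KtD Ext R Γ)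

/-- `Q` holds of every labeled sequent occurring in the derivation `D`
    (including the end sequent). -/
def G3KtD.allSeq {Ext : LSeq → LSeq → Prop} (Q : LSeq → Prop) :
    ∀ {R : RelSet} {Γ : Multiset (Label × Formula)}, G3KtD Ext R Γ → Prop
  | _, _, .id R Γ x p => Q (R, (x, .pos p) ::ₘ (x, .neg p) ::ₘ Γ)
  | _, _, .orR R Γ x A B D => Q (R, (x, .or A B) ::ₘ Γ) ∧ D.allSeq Q
  | _, _, .andR R Γ x A B D1 D2 =>
      Q (R, (x, .and A B) ::ₘ Γ) ∧ D1.allSeq Q ∧ D2.allSeq Q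
  | _, _, .boxR R Γ x _ A _ D => Q (R, (x, .box A) ::ₘ Γ) ∧ D.allSeq Q
  | _, _, .diaR R Γ x _ A _ D => Q (R, (x, .dia A) ::ₘ Γ) ∧ D.allSeq Q
  | _, _, .bboxR R Γ x _ A _ D => Q (R, (x, .bbox A) ::ₘ Γ) ∧ D.allSeq Q
  | _, _, .bdiaR R Γ x _ A _ D => Q (R, (x, .bdia A) ::ₘ Γ) ∧ D.allSeq Q
  | _, _, .ext _ _ R Γ _ D => Q (R, Γ) ∧ D.allSeq Q

/-! ## Paths, inverses, compositions, completion, propagation rules -/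

/-- The inverse of a diamond: `◇⁻¹ = ◆` and `◆⁻¹ = ◇`. -/
def Dmd.inv : Dmd → Dmd
  | .wd => .bd
  | .bd => .wd

/-- The inverse `I(F)` of a path axiom `F`. -/
def PathAx.inv (F : PathAx) : PathAx := ⟨(F.ant.map Dmd.inv).reverse, F.suc.inv⟩

/-- `I(P)`, the set of inverses of the path axioms in `P`. -/
def invSet (P : Set PathAx) : Set PathAx := {F | ∃ G ∈ P, F = G.inv}

/-- The completion `P*`: the smallest set of path axioms containing `P`,
    containing `◇A → ◇A` and `◆A → ◆A`, and closed under compositions. -/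
inductive Completion (P : Set PathAx) : PathAx → Prop
  | base {F : PathAx} : F ∈ P → Completion P F
  | wrefl : Completion P ⟨[Dmd.wd], Dmd.wd⟩
  | brefl : Completion P ⟨[Dmd.bd], Dmd.bd⟩
  | comp {F G : PathAx} (i : Nat) (hi : i < G.ant.length) :
      Completion P F → Completion P G → G.ant.get ⟨i, hi⟩ = F.suc →
      Completion P ⟨G.ant.take i ++ F.ant ++ G.ant.drop (i + 1), G.suc⟩

/-- `(P ∪ I(P))*`. -/
def PStar (P : Set PathAx) : PathAx → Prop := Completion (P ∪ invSet P)

/-- A path from `x` to `y` with the given string of diamonds in the propagation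
    graph determined by the edge set `E`: each `Rxy` contributes the labeled
    edges `(x, y, ◇)` and `(y, x, ◆)`. -/
inductive LPath (E : Finset (Label × Label)) : Label → Label → List Dmd → Prop
  | nil (x : Label) : LPath E x x []
  | fwd {x z y : Label} {ds : List Dmd} :
      (x, z) ∈ E → LPath E z y ds → LPath E x y (Dmd.wd :: ds)
  | bwd {x z y : Label} {ds : List Dmd} :
      (z, x) ∈ E → LPath E z y ds → LPath E x y (Dmd.bd :: ds)

/-- The labeled propagation rules `LabPr(P)` (premise, conclusion):
    from `R, x:⟨?⟩A, y:A, Γ` infer `R, x:⟨?⟩A, Γ`, provided there is a path `π`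
    from `x` to `y` in the propagation graph of the premise whose string `Π`
    satisfies `ΠA → ⟨?⟩A ∈ (P ∪ I(P))*`. -/
def LabPr (P : Set PathAx) : LSeq → LSeq → Prop :=
  fun prem concl =>
    ∃ (R : RelSet) (Γ : Multiset (Label × Formula)) (x y : Label)
      (A : Formula) (d : Dmd) (Pi : List Dmd),
      prem = (R, (x, dmdF d A) ::ₘ (y, A) ::ₘ Γ) ∧
      concl = (R, (x, dmdF d A) ::ₘ Γ) ∧
      LPath R x y Pi ∧ PStar P ⟨Pi, d⟩

/-! ## Labeled graphs, labeled polytrees, and the translations 𝔏 and 𝔑 -/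

/-- A labeled graph `(V, E, L)`: vertices decorated with multisets of formulae. -/
structure LGraph : Type where
  V : Finset Label
  E : Finset (Label × Label)
  L : Label → Multiset Formula

/-- Union of labeled graphs (multiset union of labels at shared vertices). -/
def LGraph.union (G H : LGraph) : LGraph :=
  ⟨G.V ∪ H.V, G.E ∪ H.E, fun z => G.L z + H.L z⟩

/-- Isomorphism of labeled graphs: a bijection between the vertex sets
    preserving edges and vertex labels. -/
def LGraph.Iso (G H : LGraph) : Prop :=
  ∃ f : Label → Label, Set.BijOn f ↑G.V ↑H.V ∧
    (∀ u ∈ G.V, ∀ v ∈ G.V, ((u, v) ∈ G.E ↔ (f u, f v) ∈ H.E)) ∧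
    (∀ v ∈ G.V, G.L v = H.L (f v))

/-- A labeled graph is a labeled polytree when its underlying undirected
    graph is a tree. -/
def LGraph.IsPolytree (G : LGraph) : Prop :=
  (∀ x y : Label, (x, y) ∈ G.E → (y, x) ∉ G.E) ∧
  (∀ e ∈ G.E, e.1 ∈ G.V ∧ e.2 ∈ G.V) ∧
  ((SimpleGraph.fromRel fun a b => (a, b) ∈ G.E).induce (↑G.V : Set Label)).IsTree

/-- The translation `𝔏ₓ` from nested sequents to labeled graphs (relational,
    since fresh vertices may be chosen arbitrarily): `LabT x X G` states that
    `G` is a labeled graph obtained by translating `X` starting at vertex `x`. -/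
inductive LabT : Label → NSeq → LGraph → Prop
  | empty (x : Label) : LabT x .empty ⟨∅, ∅, fun _ => 0⟩
  | fml (x : Label) (A : Formula) :
      LabT x (.fml A) ⟨{x}, ∅, fun z => if z = x then {A} else 0⟩
  | comma {x : Label} {X Y : NSeq} {G H : LGraph} :
      LabT x X G → LabT x Y H → G.V ∩ H.V ⊆ {x} →
      LabT x (X.comma Y) (G.union H)
  | white {x y : Label} {X : NSeq} {G : LGraph} :
      LabT y X G → x ∉ G.V → x ≠ y →
      LabT x X.white ⟨insert x (insert y G.V), insert (x, y) G.E, G.L⟩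
  | black {x y : Label} {X : NSeq} {G : LGraph} :
      LabT y X G → x ∉ G.V → x ≠ y →
      LabT x X.black ⟨insert x (insert y G.V), insert (y, x) G.E, G.L⟩

/-- The translation `𝔑ₓ` from labeled polytrees (rooted at a chosen vertex `x`)
    to nested sequents: the inverse of the translation `𝔏ₓ`. -/
def NTrans (x : Label) (G : LGraph) (X : NSeq) : Prop := LabT x X G

/-- The labeled graph of a labeled sequent `R, Γ`: vertices are the occurring
    labels, edges are given by `R`, and each vertex `x` is labeled by the
    multiset `{A | x:A ∈ Γ}`. -/
def toLGraph (R : RelSet) (Γ : Multiset (Label × Formula)) : LGraph where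
  V := R.image Prod.fst ∪ R.image Prod.snd ∪ (Γ.map Prod.fst).toFinset
  E := R
  L := fun z => (Γ.filter fun p => p.1 = z).map Prod.snd

/-- The multiset of labeled formulae of a labeled graph, read as a sequent. -/
def LGraph.toSeqGamma (G : LGraph) : Multiset (Label × Formula) :=
  G.V.val.bind fun v => (G.L v).map fun A => (v, A)

/-- The set of labels occurring in a labeled sequent. -/
def seqLabels (R : RelSet) (Γ : Multiset (Label × Formula)) : Set Label :=
  {z | (∃ w, (z, w) ∈ R ∨ (w, z) ∈ R) ∨ ∃ A, (z, A) ∈ Γ}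

/-- `R, Γ` is a labeled polytree sequent: its underlying undirected graph
    (on the occurring labels) is a tree. -/
def IsPolytreeSeq (R : RelSet) (Γ : Multiset (Label × Formula)) : Prop :=
  (∀ x y : Label, (x, y) ∈ R → (y, x) ∉ R) ∧
  ((SimpleGraph.fromRel fun a b => (a, b) ∈ R).induce (seqLabels R Γ)).IsTree

/-- The labeled edges `(u, v, ◇)` and `(v, u, ◆)` of the propagation graph
    determined by an edge set. -/
def propEdges (E : Finset (Label × Label)) : Set (Label × Label × Dmd) :=
  {e | ∃ u v : Label, (u, v) ∈ E ∧ (e = (u, v, Dmd.wd) ∨ e = (v, u, Dmd.bd))}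

/-- The deep propagation rules `DeepPr(P)` (premise, conclusion), expressed via
    the labeled polytree representation of nested sequents: from
    `X[⟨?⟩A]ᵢ[A]ⱼ` infer `X[⟨?⟩A]ᵢ[∅]ⱼ`, provided there is a path from node `i`
    (= `u`) to node `j` (= `v`) in the propagation graph of the premise whose
    string `Π` satisfies `ΠA → ⟨?⟩A ∈ (P ∪ I(P))*`. -/
def DeepPrL (P : Set PathAx) : NSeq → NSeq → Prop :=
  fun prem concl =>
    ∃ (r : Label) (G : LGraph) (u v : Label) (A : Formula) (d : Dmd)
      (Pi : List Dmd),
      LabT r prem G ∧ LPath G.E u v Pi ∧ PStar P ⟨Pi, d⟩ ∧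
      dmdF d A ∈ G.L u ∧ A ∈ G.L v ∧
      LabT r concl ⟨G.V, G.E, fun z => if z = v then (G.L v).erase A else G.L z⟩

/-! ### Auxiliary machinery for the display-derivability theorem -/

/-- Undirected connectivity within an edge set. -/
def Conn (E : Finset (Label × Label)) : Label → Label → Prop :=
  Relation.ReflTransGen (fun u v => (u, v) ∈ E ∨ (v, u) ∈ E)

theorem Conn.symm' {E : Finset (Label × Label)} {a b : Label}
    (h : Conn E a b) : Conn E b a :=
  (@Relation.ReflTransGen.symmetric _ (fun u v => (u, v) ∈ E ∨ (v, u) ∈ E)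
    ⟨fun _ _ h => h.symm⟩).symm _ _ h

theorem Conn.mono' {E E' : Finset (Label × Label)} (hEE : E ⊆ E')
    {a b : Label} (h : Conn E a b) : Conn E' a b :=
  Relation.ReflTransGen.mono (r := fun u v => (u, v) ∈ E ∨ (v, u) ∈ E)
    (p := fun u v => (u, v) ∈ E' ∨ (v, u) ∈ E')
    (fun (u v : Label) (h : (u, v) ∈ E ∨ (v, u) ∈ E) => h.imp (fun q => hEE q) (fun q => hEE q)) _ _ h

theorem LGraph.ext' {G H : LGraph} (hV : G.V = H.V) (hE : G.E = H.E)
    (hL : G.L = H.L) : G = H := by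
  cases G; cases H; simp_all

/-- The chief well-formedness invariants of graphs produced by `LabT`. -/
structure GWF (x : Label) (G : LGraph) : Prop where
  l0 : ∀ z, z ∉ G.V → G.L z = 0
  edge : ∀ e ∈ G.E, e.1 ∈ G.V ∧ e.2 ∈ G.V ∧ e.1 ≠ e.2
  root : G.V ≠ ∅ → x ∈ G.V
  conn : ∀ z ∈ G.V, Conn G.E x z
  flat : G.E = ∅ → G.V ⊆ {x}
  lne : G.V = {x} → G.E = ∅ → G.L x ≠ 0
  v0 : G.V = ∅ → G = ⟨∅, ∅, fun _ => 0⟩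
  rootedge : G.E ≠ ∅ → ∃ c, (x, c) ∈ G.E ∨ (c, x) ∈ G.E

theorem labT_wf {x : Label} {X : NSeq} {G : LGraph} (h : LabT x X G) : GWF x G := by
  induction h with
  | empty x =>
    exact ⟨fun z _ => rfl, by simp, by simp, by simp, by simp,
      fun h _ => absurd h.symm (Finset.singleton_ne_empty x), fun _ => rfl, by simp⟩
  | fml x A =>
    refine ⟨fun z hz => ?_, by simp, fun _ => Finset.mem_singleton_self x, ?_, by simp, ?_,
      fun h => absurd h (Finset.singleton_ne_empty x), by simp⟩
    · simp only [Finset.mem_singleton] at hz; simp [hz]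
    · intro z hz; simp only [Finset.mem_singleton] at hz; subst hz
      exact Relation.ReflTransGen.refl
    · intro _ _; simp
  | @comma x X Y Gl Hl h1 h2 hsub ih1 ih2 =>
    constructor
    · intro z hz
      simp only [LGraph.union, Finset.mem_union, not_or] at hz ⊢
      rw [ih1.l0 z hz.1, ih2.l0 z hz.2]; rfl
    · intro e he
      simp only [LGraph.union, Finset.mem_union] at he ⊢
      rcases he with he | he
      · obtain ⟨a, b, c⟩ := ih1.edge e he; exact ⟨Or.inl a, Or.inl b, c⟩
      · obtain ⟨a, b, c⟩ := ih2.edge e he; exact ⟨Or.inr a, Or.inr b, c⟩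
    · intro hne
      have hne' : ¬ (Gl.V = ∅ ∧ Hl.V = ∅) := fun hh => hne (by simp [LGraph.union, hh.1, hh.2])
      simp only [LGraph.union, Finset.mem_union]
      rcases not_and_or.1 hne' with hne2 | hne2
      · exact Or.inl (ih1.root hne2)
      · exact Or.inr (ih2.root hne2)
    · intro z hz
      simp only [LGraph.union, Finset.mem_union] at hz
      rcases hz with hz | hz
      · exact (ih1.conn z hz).mono' Finset.subset_union_left
      · exact (ih2.conn z hz).mono' Finset.subset_union_right
    · intro hE
      simp only [LGraph.union, Finset.union_eq_empty] at hE
      simp only [LGraph.union]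
      exact Finset.union_subset (ih1.flat hE.1) (ih2.flat hE.2)
    · intro hV hE
      simp only [LGraph.union, Finset.union_eq_empty] at hE
      simp only [LGraph.union] at hV
      have s1 : Gl.V ⊆ {x} := hV ▸ Finset.subset_union_left
      have s2 : Hl.V ⊆ {x} := hV ▸ Finset.subset_union_right
      intro hc
      simp only [LGraph.union] at hc
      have c1 : Gl.L x = 0 := Multiset.le_zero.1 (hc ▸ le_add_right le_rfl)
      have c2 : Hl.L x = 0 := Multiset.le_zero.1 (hc ▸ le_add_left le_rfl)
      rcases Finset.subset_singleton_iff.1 s1 with h1 | h1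
      · rcases Finset.subset_singleton_iff.1 s2 with h2 | h2
        · rw [h1, h2] at hV
          simp only [Finset.empty_union] at hV
          exact (Finset.singleton_ne_empty x) hV.symm
        · exact ih2.lne h2 hE.2 c2
      · exact ih1.lne h1 hE.1 c1
    · intro hV
      simp only [LGraph.union, Finset.union_eq_empty] at hV
      have e1 := ih1.v0 hV.1; have e2 := ih2.v0 hV.2
      apply LGraph.ext'
      · simp [LGraph.union, hV.1, hV.2]
      · simp [LGraph.union, congrArg LGraph.E e1, congrArg LGraph.E e2]
      · funext z
        simp [LGraph.union, ih1.l0 z (by simp [hV.1]), ih2.l0 z (by simp [hV.2])]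
    · intro hne
      have hne' : ¬ (Gl.E = ∅ ∧ Hl.E = ∅) := fun hh => hne (by simp [LGraph.union, hh.1, hh.2])
      rcases not_and_or.1 hne' with hne | hne
      · obtain ⟨c, hc⟩ := ih1.rootedge hne
        exact ⟨c, hc.imp (fun q => Finset.mem_union_left _ q) (fun q => Finset.mem_union_left _ q)⟩
      · obtain ⟨c, hc⟩ := ih2.rootedge hne
        exact ⟨c, hc.imp (fun q => Finset.mem_union_right _ q) (fun q => Finset.mem_union_right _ q)⟩
  | @white x y X G h hx hxy ih =>
    constructor
    · intro z hz
      simp only [Finset.mem_insert, not_or] at hz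
      exact ih.l0 z hz.2.2
    · intro e he
      rcases Finset.mem_insert.1 he with he | he
      · subst he; exact ⟨by simp, by simp, hxy⟩
      · obtain ⟨a, b, c⟩ := ih.edge e he
        exact ⟨by simp [a], by simp [b], c⟩
    · intro _; simp
    · intro z hz
      rcases Finset.mem_insert.1 hz with hz | hz
      · subst hz; exact Relation.ReflTransGen.refl
      · refine Relation.ReflTransGen.head (Or.inl (Finset.mem_insert_self _ _)) ?_
        rcases Finset.mem_insert.1 hz with hz | hz
        · subst hz; exact Relation.ReflTransGen.refl
        · exact (ih.conn z hz).mono' (Finset.subset_insert _ _)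
    · intro hE; exact absurd hE (Finset.insert_ne_empty _ _)
    · intro _ hE; exact absurd hE (Finset.insert_ne_empty _ _)
    · intro hV; exact absurd hV (Finset.insert_ne_empty _ _)
    · intro _; exact ⟨y, Or.inl (Finset.mem_insert_self _ _)⟩
  | @black x y X G h hx hxy ih =>
    constructor
    · intro z hz
      simp only [Finset.mem_insert, not_or] at hz
      exact ih.l0 z hz.2.2
    · intro e he
      rcases Finset.mem_insert.1 he with he | he
      · subst he; exact ⟨by simp, by simp, fun q => hxy q.symm⟩
      · obtain ⟨a, b, c⟩ := ih.edge e he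
        exact ⟨by simp [a], by simp [b], c⟩
    · intro _; simp
    · intro z hz
      rcases Finset.mem_insert.1 hz with hz | hz
      · subst hz; exact Relation.ReflTransGen.refl
      · refine Relation.ReflTransGen.head (Or.inr (Finset.mem_insert_self _ _)) ?_
        rcases Finset.mem_insert.1 hz with hz | hz
        · subst hz; exact Relation.ReflTransGen.refl
        · exact (ih.conn z hz).mono' (Finset.subset_insert _ _)
    · intro hE; exact absurd hE (Finset.insert_ne_empty _ _)
    · intro _ hE; exact absurd hE (Finset.insert_ne_empty _ _)
    · intro hV; exact absurd hV (Finset.insert_ne_empty _ _)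
    · intro _; exact ⟨y, Or.inr (Finset.mem_insert_self _ _)⟩

/-! ### `NEquiv` utilities and flat sequents -/

theorem neq_unitl (X : NSeq) : NEquiv (NSeq.empty.comma X) X :=
  NEquiv.trans (NEquiv.comm _ _) (NEquiv.unit X)

/-- `(a, w), b ≡ (a, b), w`. -/
theorem neq_shuffle (a w b : NSeq) :
    NEquiv ((a.comma w).comma b) ((a.comma b).comma w) :=
  NEquiv.trans (NEquiv.assoc a w b)
    (NEquiv.trans (NEquiv.commaCongr (NEquiv.refl a) (NEquiv.comm w b))
      (NEquiv.symm (NEquiv.assoc a b w)))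

def rebuildL : List Formula → NSeq
  | [] => .empty
  | A :: l => (NSeq.fml A).comma (rebuildL l)

theorem rebuild_perm {l l' : List Formula} (h : l.Perm l') :
    NEquiv (rebuildL l) (rebuildL l') := by
  induction h with
  | nil => exact NEquiv.refl _
  | cons A _ ih => exact NEquiv.commaCongr (NEquiv.refl _) ih
  | swap A B l =>
    exact NEquiv.trans (NEquiv.symm (NEquiv.assoc _ _ _))
      (NEquiv.trans (NEquiv.commaCongr (NEquiv.comm _ _) (NEquiv.refl _))
        (NEquiv.assoc _ _ _))
  | trans _ _ ih1 ih2 => exact NEquiv.trans ih1 ih2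

theorem rebuild_append (l1 l2 : List Formula) :
    NEquiv (rebuildL (l1 ++ l2)) ((rebuildL l1).comma (rebuildL l2)) := by
  induction l1 with
  | nil => exact NEquiv.symm (neq_unitl _)
  | cons A l ih =>
    exact NEquiv.trans (NEquiv.commaCongr (NEquiv.refl _) ih)
      (NEquiv.symm (NEquiv.assoc _ _ _))

noncomputable def rebuildM (m : Multiset Formula) : NSeq := rebuildL m.toList

theorem rebuildM_zero : NEquiv (rebuildM 0) NSeq.empty := by
  rw [rebuildM, Multiset.toList_zero]; exact NEquiv.refl _

theorem rebuildM_single (A : Formula) : NEquiv (rebuildM {A}) (NSeq.fml A) := by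
  refine NEquiv.trans (rebuild_perm (l' := [A]) ?_) (NEquiv.unit _)
  rw [← Multiset.coe_eq_coe, Multiset.coe_toList]; rfl

theorem rebuildM_add (m1 m2 : Multiset Formula) :
    NEquiv (rebuildM (m1 + m2)) ((rebuildM m1).comma (rebuildM m2)) := by
  refine NEquiv.trans (rebuild_perm (l' := m1.toList ++ m2.toList) ?_)
    (rebuild_append _ _)
  rw [← Multiset.coe_eq_coe, Multiset.coe_toList]
  simp only [← Multiset.coe_add, Multiset.coe_toList]

theorem labT_flat {x : Label} {X : NSeq} {G : LGraph} (h : LabT x X G)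
    (hE : G.E = ∅) : NEquiv X (rebuildM (G.L x)) := by
  induction h with
  | empty y => exact NEquiv.symm rebuildM_zero
  | fml y A =>
    have h1 : ({ V := {y}, E := ∅, L := fun z => if z = y then ({A} : Multiset Formula) else 0 } : LGraph).L y = {A} := by simp
    rw [h1]
    exact NEquiv.symm (rebuildM_single A)
  | @comma y X Y Gl Hl h1 h2 hsub ih1 ih2 =>
    simp only [LGraph.union, Finset.union_eq_empty] at hE
    exact NEquiv.trans (NEquiv.commaCongr (ih1 hE.1) (ih2 hE.2))
      (NEquiv.symm (rebuildM_add _ _))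
  | white h hx hxy ih => exact absurd hE (Finset.insert_ne_empty _ _)
  | black h hx hxy ih => exact absurd hE (Finset.insert_ne_empty _ _)

theorem DisplayDeriv.trans' {X Y Z : NSeq} (h1 : DisplayDeriv X Y)
    (h2 : DisplayDeriv Y Z) : DisplayDeriv X Z := by
  induction h1 with
  | refl => exact h2
  | equiv he _ ih => exact DisplayDeriv.equiv he (ih h2)
  | rf _ ih => exact DisplayDeriv.rf (ih h2)
  | rp _ ih => exact DisplayDeriv.rp (ih h2)

/-! ### Graph union algebra and branches -/

theorem union_rot (A B C : LGraph) : (A.union B).union C = (A.union C).union B := by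
  apply LGraph.ext'
  · exact Finset.union_right_comm _ _ _
  · exact Finset.union_right_comm _ _ _
  · funext z; exact add_right_comm _ _ _

theorem union_assoc' (A B C : LGraph) : A.union (B.union C) = (A.union B).union C := by
  apply LGraph.ext'
  · exact (Finset.union_assoc _ _ _).symm
  · exact (Finset.union_assoc _ _ _).symm
  · funext z; exact (add_assoc _ _ _).symm

/-- The branch graph: subtree `H` rooted at `c`, hung from `x` by the edge `e`. -/
def wbr (x c : Label) (e : Label × Label) (H : LGraph) : LGraph :=
  ⟨insert x (insert c H.V), insert e H.E, H.L⟩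

theorem union_swap_br (x c : Label) (e : Label × Label) (Gw Gc : LGraph) :
    Gw.union (wbr x c e Gc) = (wbr c x e Gw).union Gc := by
  apply LGraph.ext'
  · ext z
    simp only [LGraph.union, wbr, Finset.mem_union, Finset.mem_insert]
    tauto
  · ext p
    simp only [LGraph.union, wbr, Finset.mem_union, Finset.mem_insert]
    tauto
  · funext z; rfl

theorem empty_union (B : LGraph) : (LGraph.mk ∅ ∅ (fun _ => 0)).union B = B := by
  apply LGraph.ext'
  · exact Finset.empty_union _
  · exact Finset.empty_union _
  · exact funext fun z => zero_add _

/-! ### Extraction of a branch at the root -/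

theorem labT_extract {x : Label} {Z : NSeq} {G : LGraph} (h : LabT x Z G) :
    (∀ c, (x, c) ∈ G.E → ∃ W Zc Gw Gc, NEquiv Z (W.comma Zc.white) ∧
      LabT x W Gw ∧ LabT c Zc Gc ∧ x ∉ Gc.V ∧ x ≠ c ∧
      Gw.V ∩ (wbr x c (x, c) Gc).V ⊆ {x} ∧ G = Gw.union (wbr x c (x, c) Gc)) ∧
    (∀ c, (c, x) ∈ G.E → ∃ W Zc Gw Gc, NEquiv Z (W.comma Zc.black) ∧
      LabT x W Gw ∧ LabT c Zc Gc ∧ x ∉ Gc.V ∧ x ≠ c ∧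
      Gw.V ∩ (wbr x c (c, x) Gc).V ⊆ {x} ∧ G = Gw.union (wbr x c (c, x) Gc)) := by
  induction h with
  | empty y =>
    exact ⟨fun c hc => absurd hc (Finset.notMem_empty _),
      fun c hc => absurd hc (Finset.notMem_empty _)⟩
  | fml y A =>
    exact ⟨fun c hc => absurd hc (Finset.notMem_empty _),
      fun c hc => absurd hc (Finset.notMem_empty _)⟩
  | @comma y X Y Gl Hl h1 h2 hsub ih1 ih2 =>
    constructor
    · intro c hc
      have hc' : (y, c) ∈ Gl.E ∪ Hl.E := hc
      rcases Finset.mem_union.1 hc' with hc2 | hc2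
      · obtain ⟨W, Zc, Gw, Gc, hEq, hW, hZc, hxGc, hxc, hint, hGeq⟩ := ih1.1 c hc2
        have hGlV : Gl.V = Gw.V ∪ (wbr y c (y, c) Gc).V := congrArg LGraph.V hGeq
        refine ⟨W.comma Y, Zc, Gw.union Hl, Gc, ?_, ?_, hZc, hxGc, hxc, ?_, ?_⟩
        · exact NEquiv.trans (NEquiv.commaCongr hEq (NEquiv.refl Y))
            (neq_shuffle W Zc.white Y)
        · refine LabT.comma hW h2 ?_
          intro z hz
          have hz' := Finset.mem_inter.1 hz
          have hzG : z ∈ Gl.V := by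
            rw [hGlV]; exact Finset.mem_union_left _ hz'.1
          exact hsub (Finset.mem_inter.2 ⟨hzG, hz'.2⟩)
        · intro z hz
          have hz' : z ∈ Gw.V ∪ Hl.V ∧ z ∈ (wbr y c (y, c) Gc).V := Finset.mem_inter.1 hz
          rcases Finset.mem_union.1 hz'.1 with h' | h'
          · exact hint (Finset.mem_inter.2 ⟨h', hz'.2⟩)
          · have hzG : z ∈ Gl.V := by
              rw [hGlV]; exact Finset.mem_union_right _ hz'.2
            exact hsub (Finset.mem_inter.2 ⟨hzG, h'⟩)
        · rw [hGeq, union_rot]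
      · obtain ⟨W, Zc, Gw, Gc, hEq, hW, hZc, hxGc, hxc, hint, hGeq⟩ := ih2.1 c hc2
        have hHlV : Hl.V = Gw.V ∪ (wbr y c (y, c) Gc).V := congrArg LGraph.V hGeq
        refine ⟨X.comma W, Zc, Gl.union Gw, Gc, ?_, ?_, hZc, hxGc, hxc, ?_, ?_⟩
        · exact NEquiv.trans (NEquiv.commaCongr (NEquiv.refl X) hEq)
            (NEquiv.symm (NEquiv.assoc X W Zc.white))
        · refine LabT.comma h1 hW ?_
          intro z hz
          have hz' := Finset.mem_inter.1 hz
          have hzH : z ∈ Hl.V := by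
            rw [hHlV]; exact Finset.mem_union_left _ hz'.2
          exact hsub (Finset.mem_inter.2 ⟨hz'.1, hzH⟩)
        · intro z hz
          have hz' : z ∈ Gl.V ∪ Gw.V ∧ z ∈ (wbr y c (y, c) Gc).V := Finset.mem_inter.1 hz
          rcases Finset.mem_union.1 hz'.1 with h' | h'
          · have hzH : z ∈ Hl.V := by
              rw [hHlV]; exact Finset.mem_union_right _ hz'.2
            exact hsub (Finset.mem_inter.2 ⟨h', hzH⟩)
          · exact hint (Finset.mem_inter.2 ⟨h', hz'.2⟩)
        · rw [hGeq, union_assoc']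
    · intro c hc
      have hc' : (c, y) ∈ Gl.E ∪ Hl.E := hc
      rcases Finset.mem_union.1 hc' with hc2 | hc2
      · obtain ⟨W, Zc, Gw, Gc, hEq, hW, hZc, hxGc, hxc, hint, hGeq⟩ := ih1.2 c hc2
        have hGlV : Gl.V = Gw.V ∪ (wbr y c (c, y) Gc).V := congrArg LGraph.V hGeq
        refine ⟨W.comma Y, Zc, Gw.union Hl, Gc, ?_, ?_, hZc, hxGc, hxc, ?_, ?_⟩
        · exact NEquiv.trans (NEquiv.commaCongr hEq (NEquiv.refl Y))
            (neq_shuffle W Zc.black Y)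
        · refine LabT.comma hW h2 ?_
          intro z hz
          have hz' := Finset.mem_inter.1 hz
          have hzG : z ∈ Gl.V := by
            rw [hGlV]; exact Finset.mem_union_left _ hz'.1
          exact hsub (Finset.mem_inter.2 ⟨hzG, hz'.2⟩)
        · intro z hz
          have hz' : z ∈ Gw.V ∪ Hl.V ∧ z ∈ (wbr y c (c, y) Gc).V := Finset.mem_inter.1 hz
          rcases Finset.mem_union.1 hz'.1 with h' | h'
          · exact hint (Finset.mem_inter.2 ⟨h', hz'.2⟩)
          · have hzG : z ∈ Gl.V := by
              rw [hGlV]; exact Finset.mem_union_right _ hz'.2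
            exact hsub (Finset.mem_inter.2 ⟨hzG, h'⟩)
        · rw [hGeq, union_rot]
      · obtain ⟨W, Zc, Gw, Gc, hEq, hW, hZc, hxGc, hxc, hint, hGeq⟩ := ih2.2 c hc2
        have hHlV : Hl.V = Gw.V ∪ (wbr y c (c, y) Gc).V := congrArg LGraph.V hGeq
        refine ⟨X.comma W, Zc, Gl.union Gw, Gc, ?_, ?_, hZc, hxGc, hxc, ?_, ?_⟩
        · exact NEquiv.trans (NEquiv.commaCongr (NEquiv.refl X) hEq)
            (NEquiv.symm (NEquiv.assoc X W Zc.black))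
        · refine LabT.comma h1 hW ?_
          intro z hz
          have hz' := Finset.mem_inter.1 hz
          have hzH : z ∈ Hl.V := by
            rw [hHlV]; exact Finset.mem_union_left _ hz'.2
          exact hsub (Finset.mem_inter.2 ⟨hz'.1, hzH⟩)
        · intro z hz
          have hz' : z ∈ Gl.V ∪ Gw.V ∧ z ∈ (wbr y c (c, y) Gc).V := Finset.mem_inter.1 hz
          rcases Finset.mem_union.1 hz'.1 with h' | h'
          · have hzH : z ∈ Hl.V := by
              rw [hHlV]; exact Finset.mem_union_right _ hz'.2
            exact hsub (Finset.mem_inter.2 ⟨h', hzH⟩)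
          · exact hint (Finset.mem_inter.2 ⟨h', hz'.2⟩)
        · rw [hGeq, union_assoc']
  | @white y w X Gc h hx hxy ih =>
    constructor
    · intro c hc
      have hc' : (y, c) ∈ insert (y, w) Gc.E := hc
      rcases Finset.mem_insert.1 hc' with hc2 | hc2
      · have hcw : c = w := (Prod.ext_iff.1 hc2).2
        subst hcw
        exact ⟨.empty, X, ⟨∅, ∅, fun _ => 0⟩, Gc, NEquiv.symm (neq_unitl _),
          LabT.empty y, h, hx, hxy, by simp, (empty_union _).symm⟩
      · exact absurd ((labT_wf h).edge _ hc2).1 hx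
    · intro c hc
      have hc' : (c, y) ∈ insert (y, w) Gc.E := hc
      rcases Finset.mem_insert.1 hc' with hc2 | hc2
      · exact absurd (Prod.ext_iff.1 hc2).2 hxy
      · exact absurd ((labT_wf h).edge _ hc2).2.1 hx
  | @black y w X Gc h hx hxy ih =>
    constructor
    · intro c hc
      have hc' : (y, c) ∈ insert (w, y) Gc.E := hc
      rcases Finset.mem_insert.1 hc' with hc2 | hc2
      · exact absurd (Prod.ext_iff.1 hc2).1 hxy
      · exact absurd ((labT_wf h).edge _ hc2).1 hx
    · intro c hc
      have hc' : (c, y) ∈ insert (w, y) Gc.E := hc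
      rcases Finset.mem_insert.1 hc' with hc2 | hc2
      · have hcw : c = w := (Prod.ext_iff.1 hc2).1
        subst hcw
        exact ⟨.empty, X, ⟨∅, ∅, fun _ => 0⟩, Gc, NEquiv.symm (neq_unitl _),
          LabT.empty y, h, hx, hxy, by simp, (empty_union _).symm⟩
      · exact absurd ((labT_wf h).edge _ hc2).2.1 hx

/-! ### Uniqueness of the branch decomposition -/

theorem walk_side {x c : Label} {Eb Ed CE : Finset (Label × Label)}
    {Vb Vd : Finset Label} {CV : Finset Label}
    (hbE : ∀ e ∈ Eb, e.1 ∈ Vb ∧ e.2 ∈ Vb ∧ e.1 ≠ e.2)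
    (hdE : ∀ e ∈ Ed, e.1 ∈ Vd ∧ e.2 ∈ Vd)
    (hxb : x ∉ Vb)
    (hCV : ∀ z ∈ CV, z ∈ insert x (insert c Vd) → z = x)
    (hsplit : ∀ e ∈ Eb, e ∈ CE ∨ e ∈ Ed ∨ e.1 = x ∨ e.2 = x)
    (hCE : ∀ e ∈ CE, e.1 ∈ CV ∧ e.2 ∈ CV)
    {z : Label} (hz : Conn Eb c z) : z ∈ insert x (insert c Vd) := by
  induction hz with
  | refl => exact Finset.mem_insert_of_mem (Finset.mem_insert_self _ _)
  | @tail b z' _ hstep ih =>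
    rcases hstep with he | he
    · have hb1 : b ∈ Vb := (hbE _ he).1
      have hz1 : z' ∈ Vb := (hbE _ he).2.1
      rcases hsplit _ he with h' | h' | h' | h'
      · exact absurd (hCV b (hCE _ h').1 ih) (fun q => hxb (q ▸ hb1))
      · exact Finset.mem_insert_of_mem (Finset.mem_insert_of_mem (hdE _ h').2)
      · exact absurd h' (fun q => hxb (q ▸ hb1))
      · rw [show z' = x from h']; exact Finset.mem_insert_self _ _
    · have hb1 : b ∈ Vb := (hbE _ he).2.1
      have hz1 : z' ∈ Vb := (hbE _ he).1
      rcases hsplit _ he with h' | h' | h' | h'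
      · exact absurd (hCV b (hCE _ h').2 ih) (fun q => hxb (q ▸ hb1))
      · exact Finset.mem_insert_of_mem (Finset.mem_insert_of_mem (hdE _ h').1)
      · rw [show z' = x from h']; exact Finset.mem_insert_self _ _
      · exact absurd h' (fun q => hxb (q ▸ hb1))

theorem uniq_vsub {x c : Label} {e0 : Label × Label} (he0 : e0 = (x, c) ∨ e0 = (c, x))
    {C Gb Gd : LGraph}
    (wC : GWF x C) (wB : GWF c Gb) (wD : GWF c Gd)
    (hxb : x ∉ Gb.V)
    (hiC : C.V ∩ (wbr x c e0 Gd).V ⊆ {x})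
    (hE : ∀ e, e ∈ Gb.E → e ∈ C.E ∪ insert e0 Gd.E) :
    Gb.V ⊆ insert x (insert c Gd.V) := by
  intro z hz
  refine walk_side (x := x) (c := c) (Eb := Gb.E) (Ed := Gd.E) (CE := C.E)
    (Vb := Gb.V) (Vd := Gd.V) (CV := C.V)
    (fun e he => wB.edge e he)
    (fun e he => ⟨(wD.edge e he).1, (wD.edge e he).2.1⟩)
    hxb ?_ ?_
    (fun e he => ⟨(wC.edge e he).1, (wC.edge e he).2.1⟩)
    (wB.conn z hz)
  · intro z' hz1 hz2
    exact Finset.mem_singleton.1 (hiC (Finset.mem_inter.2 ⟨hz1, hz2⟩))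
  · intro e he
    rcases Finset.mem_union.1 (hE e he) with h' | h'
    · exact Or.inl h'
    · rcases Finset.mem_insert.1 h' with h' | h'
      · rw [h']
        rcases he0 with h0 | h0
        · exact Or.inr (Or.inr (Or.inl (by rw [h0])))
        · exact Or.inr (Or.inr (Or.inr (by rw [h0])))
      · exact Or.inr (Or.inl h')

theorem uniq_split {x c : Label} {e0 : Label × Label} (he0 : e0 = (x, c) ∨ e0 = (c, x))
    {A C Gb Gd : LGraph}
    (wA : GWF x A) (wC : GWF x C) (wB : GWF c Gb) (wD : GWF c Gd)
    (hxb : x ∉ Gb.V) (hxd : x ∉ Gd.V) (hxc : x ≠ c)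
    (hiA : A.V ∩ (wbr x c e0 Gb).V ⊆ {x}) (hiC : C.V ∩ (wbr x c e0 Gd).V ⊆ {x})
    (hG : A.union (wbr x c e0 Gb) = C.union (wbr x c e0 Gd)) :
    A = C ∧ Gb = Gd := by
  have hV : A.V ∪ insert x (insert c Gb.V) = C.V ∪ insert x (insert c Gd.V) :=
    congrArg LGraph.V hG
  have hEq : A.E ∪ insert e0 Gb.E = C.E ∪ insert e0 Gd.E :=
    congrArg LGraph.E hG
  have hL : ∀ z, A.L z + Gb.L z = C.L z + Gd.L z :=
    fun z => congrFun (congrArg LGraph.L hG) z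
  have he0x : e0.1 = x ∨ e0.2 = x := by
    rcases he0 with h0 | h0
    · exact Or.inl (by rw [h0])
    · exact Or.inr (by rw [h0])
  -- membership transporters
  have hmemBD : ∀ e ∈ Gb.E, e ∈ C.E ∪ insert e0 Gd.E := by
    intro e he
    rw [← hEq]; exact Finset.mem_union_right _ (Finset.mem_insert_of_mem he)
  have hmemDB : ∀ e ∈ Gd.E, e ∈ A.E ∪ insert e0 Gb.E := by
    intro e he
    rw [hEq]; exact Finset.mem_union_right _ (Finset.mem_insert_of_mem he)
  -- vertex sets of the branches coincide
  have hsub1 : Gb.V ⊆ insert x (insert c Gd.V) := uniq_vsub he0 wC wB wD hxb hiC hmemBD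
  have hsub2 : Gd.V ⊆ insert x (insert c Gb.V) := uniq_vsub he0 wA wD wB hxd hiA hmemDB
  have hVbd : (insert x (insert c Gb.V) : Finset Label) = insert x (insert c Gd.V) := by
    apply Finset.Subset.antisymm
    · refine Finset.insert_subset (Finset.mem_insert_self _ _) ?_
      exact Finset.insert_subset (Finset.mem_insert_of_mem (Finset.mem_insert_self _ _)) hsub1
    · refine Finset.insert_subset (Finset.mem_insert_self _ _) ?_
      exact Finset.insert_subset (Finset.mem_insert_of_mem (Finset.mem_insert_self _ _)) hsub2
  -- edge sets of the branches coincide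
  have hne_x_b : ∀ e ∈ Gb.E, e.1 ≠ x ∧ e.2 ≠ x := by
    intro e he
    exact ⟨fun q => hxb (q ▸ (wB.edge e he).1), fun q => hxb (q ▸ (wB.edge e he).2.1)⟩
  have hne_x_d : ∀ e ∈ Gd.E, e.1 ≠ x ∧ e.2 ≠ x := by
    intro e he
    exact ⟨fun q => hxd (q ▸ (wD.edge e he).1), fun q => hxd (q ▸ (wD.edge e he).2.1)⟩
  have hEbd : Gb.E = Gd.E := by
    ext e
    constructor
    · intro he
      rcases Finset.mem_union.1 (hmemBD e he) with h' | h'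
      · exfalso
        have h1 : e.1 ∈ insert x (insert c Gd.V) := hsub1 (wB.edge e he).1
        have := hiC (Finset.mem_inter.2 ⟨(wC.edge e h').1, h1⟩)
        exact (hne_x_b e he).1 (Finset.mem_singleton.1 this)
      · rcases Finset.mem_insert.1 h' with h' | h'
        · exfalso
          rcases he0x with h0 | h0
          · exact (hne_x_b e he).1 (by rw [h']; exact h0)
          · exact (hne_x_b e he).2 (by rw [h']; exact h0)
        · exact h'
    · intro he
      rcases Finset.mem_union.1 (hmemDB e he) with h' | h'
      · exfalso
        have h1 : e.1 ∈ insert x (insert c Gb.V) := hsub2 (wD.edge e he).1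
        have := hiA (Finset.mem_inter.2 ⟨(wA.edge e h').1, h1⟩)
        exact (hne_x_d e he).1 (Finset.mem_singleton.1 this)
      · rcases Finset.mem_insert.1 h' with h' | h'
        · exfalso
          rcases he0x with h0 | h0
          · exact (hne_x_d e he).1 (by rw [h']; exact h0)
          · exact (hne_x_d e he).2 (by rw [h']; exact h0)
        · exact h'
  -- vertex sets of the subtrees coincide
  have hxgb : x ∉ insert c Gb.V := by
    simp only [Finset.mem_insert, not_or]; exact ⟨hxc, hxb⟩
  have hxgd : x ∉ insert c Gd.V := by
    simp only [Finset.mem_insert, not_or]; exact ⟨hxc, hxd⟩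
  have h1 : insert c Gb.V = insert c Gd.V := by
    rw [← Finset.erase_insert hxgb, ← Finset.erase_insert hxgd, hVbd]
  have hcA : c ∉ A.V := by
    intro hca
    refine hxc (Finset.mem_singleton.1 (hiA (Finset.mem_inter.2 ⟨hca, ?_⟩))).symm
    exact Finset.mem_insert_of_mem (Finset.mem_insert_self _ _)
  have hcC : c ∉ C.V := by
    intro hca
    refine hxc (Finset.mem_singleton.1 (hiC (Finset.mem_inter.2 ⟨hca, ?_⟩))).symm
    exact Finset.mem_insert_of_mem (Finset.mem_insert_self _ _)
  have hVgbd : Gb.V = Gd.V := by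
    by_cases hcb : c ∈ Gb.V <;> by_cases hcd : c ∈ Gd.V
    · rw [← Finset.insert_eq_self.2 hcb, h1, Finset.insert_eq_self.2 hcd]
    · exfalso
      have hd0 : Gd.V = ∅ := by
        by_contra hq
        exact hcd (wD.root hq)
      have hDemp := wD.v0 hd0
      have hDE : Gd.E = ∅ := congrArg LGraph.E hDemp
      have hDL : Gd.L = fun _ => 0 := congrArg LGraph.L hDemp
      have hgb : Gb.V = {c} := by
        rw [hd0] at h1
        refine Finset.Subset.antisymm ?_ (Finset.singleton_subset_iff.2 hcb)
        intro z hz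
        have : z ∈ insert c Gb.V := Finset.mem_insert_of_mem hz
        rw [h1] at this
        exact this
      have hlne := wB.lne hgb (hEbd.trans hDE)
      have := hL c
      rw [wA.l0 c hcA, wC.l0 c hcC, hDL] at this
      simp only [zero_add] at this
      exact hlne this
    · exfalso
      have hb0 : Gb.V = ∅ := by
        by_contra hq
        exact hcb (wB.root hq)
      have hBemp := wB.v0 hb0
      have hBE : Gb.E = ∅ := congrArg LGraph.E hBemp
      have hBL : Gb.L = fun _ => 0 := congrArg LGraph.L hBemp
      have hgd : Gd.V = {c} := by
        rw [hb0] at h1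
        refine Finset.Subset.antisymm ?_ (Finset.singleton_subset_iff.2 hcd)
        intro z hz
        have : z ∈ insert c Gd.V := Finset.mem_insert_of_mem hz
        rw [← h1] at this
        exact this
      have hlne := wD.lne hgd (hEbd.symm.trans hBE)
      have := hL c
      rw [wA.l0 c hcA, wC.l0 c hcC, hBL] at this
      simp only [zero_add] at this
      exact hlne this.symm
    · have e1 : Gb.V = (insert c Gb.V).erase c := (Finset.erase_insert hcb).symm
      have e2 : Gd.V = (insert c Gd.V).erase c := (Finset.erase_insert hcd).symm
      rw [e1, e2, h1]
  -- labels of the subtrees coincide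
  have hLbd : Gb.L = Gd.L := by
    funext z
    by_cases hzb : z ∈ Gb.V
    · have hzx : z ≠ x := fun q => hxb (q ▸ hzb)
      have hzA : A.L z = 0 := by
        refine wA.l0 z (fun hq => hzx (Finset.mem_singleton.1
          (hiA (Finset.mem_inter.2 ⟨hq, ?_⟩))))
        exact Finset.mem_insert_of_mem (Finset.mem_insert_of_mem hzb)
      have hzC : C.L z = 0 := by
        refine wC.l0 z (fun hq => hzx (Finset.mem_singleton.1
          (hiC (Finset.mem_inter.2 ⟨hq, ?_⟩))))
        exact Finset.mem_insert_of_mem (Finset.mem_insert_of_mem (hVgbd ▸ hzb))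
      have := hL z
      rw [hzA, hzC, zero_add, zero_add] at this
      exact this
    · rw [wB.l0 z hzb, wD.l0 z (hVgbd ▸ hzb)]
  have hBD : Gb = Gd := LGraph.ext' hVgbd hEbd hLbd
  -- the complements coincide
  have hAE : A.E = C.E := by
    ext e
    constructor
    · intro he
      have heq : e ∈ C.E ∪ insert e0 Gd.E := by
        rw [← hEq]; exact Finset.mem_union_left _ he
      rcases Finset.mem_union.1 heq with h' | h'
      · exact h'
      · exfalso
        rcases Finset.mem_insert.1 h' with h' | h'
        · rcases he0 with h0 | h0
          · exact hcA (by rw [← show e.2 = c from by rw [h', h0]]; exact (wA.edge e he).2.1)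
          · exact hcA (by rw [← show e.1 = c from by rw [h', h0]]; exact (wA.edge e he).1)
        · have h1 : e.1 ∈ insert x (insert c Gb.V) :=
            Finset.mem_insert_of_mem (Finset.mem_insert_of_mem (hBD ▸ (wD.edge e h').1))
          have := hiA (Finset.mem_inter.2 ⟨(wA.edge e he).1, h1⟩)
          have hx1 : e.1 = x := Finset.mem_singleton.1 this
          exact hxb (hx1 ▸ (hBD ▸ (wD.edge e h').1))
    · intro he
      have heq : e ∈ A.E ∪ insert e0 Gb.E := by
        rw [hEq]; exact Finset.mem_union_left _ he
      rcases Finset.mem_union.1 heq with h' | h'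
      · exact h'
      · exfalso
        rcases Finset.mem_insert.1 h' with h' | h'
        · rcases he0 with h0 | h0
          · exact hcC (by rw [← show e.2 = c from by rw [h', h0]]; exact (wC.edge e he).2.1)
          · exact hcC (by rw [← show e.1 = c from by rw [h', h0]]; exact (wC.edge e he).1)
        · have h1 : e.1 ∈ insert x (insert c Gd.V) :=
            Finset.mem_insert_of_mem (Finset.mem_insert_of_mem (hBD ▸ (wB.edge e h').1))
          have := hiC (Finset.mem_inter.2 ⟨(wC.edge e he).1, h1⟩)
          have hx1 : e.1 = x := Finset.mem_singleton.1 this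
          exact hxd (hx1 ▸ (hBD ▸ (wB.edge e h').1))
  have hxAC : (x ∈ A.V → x ∈ C.V) ∧ (x ∈ C.V → x ∈ A.V) := by
    constructor
    · intro hxA
      by_contra hxC
      have hC0 : C.V = ∅ := by
        by_contra hq
        exact hxC (wC.root hq)
      have hCemp := wC.v0 hC0
      have hCE : C.E = ∅ := congrArg LGraph.E hCemp
      have hCL : C.L = fun _ => 0 := congrArg LGraph.L hCemp
      have hAV : A.V = {x} :=
        Finset.Subset.antisymm (wA.flat (hAE.trans hCE)) (Finset.singleton_subset_iff.2 hxA)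
      have hlne := wA.lne hAV (hAE.trans hCE)
      have := hL x
      rw [wB.l0 x hxb, wD.l0 x hxd, hCL] at this
      simp only [add_zero, zero_add] at this
      exact hlne this
    · intro hxC
      by_contra hxA
      have hA0 : A.V = ∅ := by
        by_contra hq
        exact hxA (wA.root hq)
      have hAemp := wA.v0 hA0
      have hAEe : A.E = ∅ := congrArg LGraph.E hAemp
      have hAL : A.L = fun _ => 0 := congrArg LGraph.L hAemp
      have hCV : C.V = {x} :=
        Finset.Subset.antisymm (wC.flat (hAE.symm.trans hAEe)) (Finset.singleton_subset_iff.2 hxC)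
      have hlne := wC.lne hCV (hAE.symm.trans hAEe)
      have := hL x
      rw [wB.l0 x hxb, wD.l0 x hxd, hAL] at this
      simp only [add_zero, zero_add] at this
      exact hlne this.symm
  have hAV : A.V = C.V := by
    ext z
    constructor
    · intro hz
      have hz2 : z ∈ C.V ∪ insert x (insert c Gd.V) := by
        rw [← hV]; exact Finset.mem_union_left _ hz
      rcases Finset.mem_union.1 hz2 with h' | h'
      · exact h'
      · have hzx : z = x := Finset.mem_singleton.1
          (hiA (Finset.mem_inter.2 ⟨hz, by rw [show (wbr x c e0 Gb).V = insert x (insert c Gb.V) from rfl, hVbd]; exact h'⟩))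
        rw [hzx]
        exact hxAC.1 (hzx ▸ hz)
    · intro hz
      have hz2 : z ∈ A.V ∪ insert x (insert c Gb.V) := by
        rw [hV]; exact Finset.mem_union_left _ hz
      rcases Finset.mem_union.1 hz2 with h' | h'
      · exact h'
      · have hzx : z = x := Finset.mem_singleton.1
          (hiC (Finset.mem_inter.2 ⟨hz, by rw [show (wbr x c e0 Gd).V = insert x (insert c Gd.V) from rfl, ← hVbd]; exact h'⟩))
        rw [hzx]
        exact hxAC.2 (hzx ▸ hz)
  have hAL : A.L = C.L := by
    funext z
    have := hL z
    rw [show Gb.L = Gd.L from hLbd] at this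
    exact add_right_cancel this
  exact ⟨LGraph.ext' hAV hAE hAL, hBD⟩

/-! ### Determinism of the translation up to `NEquiv`, and rerooting -/

theorem labT_det_aux : ∀ n : ℕ, ∀ G : LGraph, G.V.card ≤ n →
    ∀ x X Y, LabT x X G → LabT x Y G → NEquiv X Y := by
  intro n
  induction n with
  | zero =>
    intro G hcard x X Y hX hY
    have hV : G.V = ∅ := Finset.card_eq_zero.1 (le_antisymm hcard (Nat.zero_le _))
    have hE : G.E = ∅ := congrArg LGraph.E ((labT_wf hX).v0 hV)
    exact NEquiv.trans (labT_flat hX hE) (NEquiv.symm (labT_flat hY hE))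
  | succ n ih =>
    intro G hcard x X Y hX hY
    by_cases hE : G.E = ∅
    · exact NEquiv.trans (labT_flat hX hE) (NEquiv.symm (labT_flat hY hE))
    · obtain ⟨c, hc⟩ := (labT_wf hX).rootedge hE
      rcases hc with hc | hc
      · obtain ⟨Wx, Zx, Ax, Gbx, eqX, hWx, hZx, hxbX, hxcX, hiX, hGX⟩ :=
          (labT_extract hX).1 c hc
        obtain ⟨Wy, Zy, Ay, Gby, eqY, hWy, hZy, hxbY, hxcY, hiY, hGY⟩ :=
          (labT_extract hY).1 c hc
        obtain ⟨hAC, hBD⟩ := uniq_split (Or.inl rfl) (labT_wf hWx) (labT_wf hWy)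
          (labT_wf hZx) (labT_wf hZy) hxbX hxbY hxcX hiX hiY (hGX.symm.trans hGY)
        have hsubB : Gbx.V ⊆ G.V := by
          rw [hGX]; intro z hz
          exact Finset.mem_union_right _
            (Finset.mem_insert_of_mem (Finset.mem_insert_of_mem hz))
        have hxG : x ∈ G.V := by
          rw [hGX]; exact Finset.mem_union_right _ (Finset.mem_insert_self _ _)
        have hcG : c ∈ G.V := by
          rw [hGX]
          exact Finset.mem_union_right _
            (Finset.mem_insert_of_mem (Finset.mem_insert_self _ _))
        have hcardB : Gbx.V.card ≤ n := by
          have := Finset.card_lt_card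
            ((Finset.ssubset_iff_of_subset hsubB).2 ⟨x, hxG, hxbX⟩)
          omega
        have hcA : c ∉ Ax.V := by
          intro hca
          refine hxcX (Finset.mem_singleton.1 (hiX (Finset.mem_inter.2 ⟨hca, ?_⟩))).symm
          exact Finset.mem_insert_of_mem (Finset.mem_insert_self _ _)
        have hsubA : Ax.V ⊆ G.V := by
          rw [hGX]; intro z hz; exact Finset.mem_union_left _ hz
        have hcardA : Ax.V.card ≤ n := by
          have := Finset.card_lt_card
            ((Finset.ssubset_iff_of_subset hsubA).2 ⟨c, hcG, hcA⟩)
          omega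
        have hWy' : LabT x Wy Ax := by rw [hAC]; exact hWy
        have hZy' : LabT c Zy Gbx := by rw [hBD]; exact hZy
        have eqW : NEquiv Wx Wy := ih Ax hcardA x Wx Wy hWx hWy'
        have eqZ : NEquiv Zx Zy := ih Gbx hcardB c Zx Zy hZx hZy'
        exact NEquiv.trans eqX (NEquiv.trans
          (NEquiv.commaCongr eqW (NEquiv.whiteCongr eqZ)) (NEquiv.symm eqY))
      · obtain ⟨Wx, Zx, Ax, Gbx, eqX, hWx, hZx, hxbX, hxcX, hiX, hGX⟩ :=
          (labT_extract hX).2 c hc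
        obtain ⟨Wy, Zy, Ay, Gby, eqY, hWy, hZy, hxbY, hxcY, hiY, hGY⟩ :=
          (labT_extract hY).2 c hc
        obtain ⟨hAC, hBD⟩ := uniq_split (Or.inr rfl) (labT_wf hWx) (labT_wf hWy)
          (labT_wf hZx) (labT_wf hZy) hxbX hxbY hxcX hiX hiY (hGX.symm.trans hGY)
        have hsubB : Gbx.V ⊆ G.V := by
          rw [hGX]; intro z hz
          exact Finset.mem_union_right _
            (Finset.mem_insert_of_mem (Finset.mem_insert_of_mem hz))
        have hxG : x ∈ G.V := by
          rw [hGX]; exact Finset.mem_union_right _ (Finset.mem_insert_self _ _)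
        have hcG : c ∈ G.V := by
          rw [hGX]
          exact Finset.mem_union_right _
            (Finset.mem_insert_of_mem (Finset.mem_insert_self _ _))
        have hcardB : Gbx.V.card ≤ n := by
          have := Finset.card_lt_card
            ((Finset.ssubset_iff_of_subset hsubB).2 ⟨x, hxG, hxbX⟩)
          omega
        have hcA : c ∉ Ax.V := by
          intro hca
          refine hxcX (Finset.mem_singleton.1 (hiX (Finset.mem_inter.2 ⟨hca, ?_⟩))).symm
          exact Finset.mem_insert_of_mem (Finset.mem_insert_self _ _)
        have hsubA : Ax.V ⊆ G.V := by
          rw [hGX]; intro z hz; exact Finset.mem_union_left _ hz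
        have hcardA : Ax.V.card ≤ n := by
          have := Finset.card_lt_card
            ((Finset.ssubset_iff_of_subset hsubA).2 ⟨c, hcG, hcA⟩)
          omega
        have hWy' : LabT x Wy Ax := by rw [hAC]; exact hWy
        have hZy' : LabT c Zy Gbx := by rw [hBD]; exact hZy
        have eqW : NEquiv Wx Wy := ih Ax hcardA x Wx Wy hWx hWy'
        have eqZ : NEquiv Zx Zy := ih Gbx hcardB c Zx Zy hZx hZy'
        exact NEquiv.trans eqX (NEquiv.trans
          (NEquiv.commaCongr eqW (NEquiv.blackCongr eqZ)) (NEquiv.symm eqY))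

theorem labT_reroot1 {u w : Label} {Y : NSeq} {G : LGraph} (hY : LabT u Y G)
    (he : (u, w) ∈ G.E ∨ (w, u) ∈ G.E) :
    ∃ Y', LabT w Y' G ∧ DisplayDeriv Y Y' := by
  rcases he with he | he
  · obtain ⟨W, Zc, Gw, Gc, hEq, hW, hZc, hxGc, hxc, hint, hGeq⟩ := (labT_extract hY).1 w he
    refine ⟨W.black.comma Zc, ?_,
      DisplayDeriv.equiv hEq (DisplayDeriv.rf (DisplayDeriv.refl _))⟩
    have hwGw : w ∉ Gw.V := by
      intro hq
      refine hxc (Finset.mem_singleton.1 (hint (Finset.mem_inter.2 ⟨hq, ?_⟩))).symm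
      exact Finset.mem_insert_of_mem (Finset.mem_insert_self _ _)
    have hb : LabT w W.black (wbr w u (u, w) Gw) :=
      LabT.black hW hwGw (fun q => hxc q.symm)
    have hcomma : LabT w (W.black.comma Zc) ((wbr w u (u, w) Gw).union Gc) := by
      refine LabT.comma hb hZc ?_
      intro z hz
      have hz' : z ∈ insert w (insert u Gw.V) ∧ z ∈ Gc.V := Finset.mem_inter.1 hz
      rcases Finset.mem_insert.1 hz'.1 with h' | h'
      · exact Finset.mem_singleton.2 h'
      · rcases Finset.mem_insert.1 h' with h' | h'
        · exact absurd (h' ▸ hz'.2) hxGc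
        · exfalso
          have hzu : z = u := Finset.mem_singleton.1 (hint (Finset.mem_inter.2
            ⟨h', Finset.mem_insert_of_mem (Finset.mem_insert_of_mem hz'.2)⟩))
          exact hxGc (hzu ▸ hz'.2)
    rw [hGeq, union_swap_br]
    exact hcomma
  · obtain ⟨W, Zc, Gw, Gc, hEq, hW, hZc, hxGc, hxc, hint, hGeq⟩ := (labT_extract hY).2 w he
    refine ⟨W.white.comma Zc, ?_,
      DisplayDeriv.equiv hEq (DisplayDeriv.rp (DisplayDeriv.refl _))⟩
    have hwGw : w ∉ Gw.V := by
      intro hq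
      refine hxc (Finset.mem_singleton.1 (hint (Finset.mem_inter.2 ⟨hq, ?_⟩))).symm
      exact Finset.mem_insert_of_mem (Finset.mem_insert_self _ _)
    have hb : LabT w W.white (wbr w u (w, u) Gw) :=
      LabT.white hW hwGw (fun q => hxc q.symm)
    have hcomma : LabT w (W.white.comma Zc) ((wbr w u (w, u) Gw).union Gc) := by
      refine LabT.comma hb hZc ?_
      intro z hz
      have hz' : z ∈ insert w (insert u Gw.V) ∧ z ∈ Gc.V := Finset.mem_inter.1 hz
      rcases Finset.mem_insert.1 hz'.1 with h' | h'
      · exact Finset.mem_singleton.2 h'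
      · rcases Finset.mem_insert.1 h' with h' | h'
        · exact absurd (h' ▸ hz'.2) hxGc
        · exfalso
          have hzu : z = u := Finset.mem_singleton.1 (hint (Finset.mem_inter.2
            ⟨h', Finset.mem_insert_of_mem (Finset.mem_insert_of_mem hz'.2)⟩))
          exact hxGc (hzu ▸ hz'.2)
    rw [hGeq, union_swap_br]
    exact hcomma

/-- Substitution of the label `y` by the label `x`. -/
def subLabel (x y z : Label) : Label := if z = y then x else z

/-- Lemma `DE_For_Diff_Node`: for any labeled polytree
    `G = (V, E, L)` and any vertices `x, y ∈ V`, the nested sequent `𝔑ₓ(G)` is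
    derivable from `𝔑_y(G)` using only the display rules (rf) and (rp). -/
theorem ntrans_display_derivable (G : LGraph) (hG : G.IsPolytree)
    (x y : Label) (hx : x ∈ G.V) (hy : y ∈ G.V) (X Y : NSeq)
    (hX : NTrans x G X) (hY : NTrans y G Y) :
    DisplayDeriv Y X := by
  have hYX : LabT y Y G := hY
  have hXX : LabT x X G := hX
  have hconn : Conn G.E y x := ((labT_wf hXX).conn y hy).symm'
  clear hG hx hy hX hY
  revert Y
  induction hconn using Relation.ReflTransGen.head_induction_on with
  | refl =>
    intro Y hY
    exact DisplayDeriv.equiv (labT_det_aux G.V.card G le_rfl x Y X hY hXX)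
      (DisplayDeriv.refl X)
  | head h' _ ih =>
    intro Y hY
    obtain ⟨Y', hY', hd⟩ := labT_reroot1 hY h'
    exact hd.trans' (ih Y' hY')
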